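/- arXiv:2604.06357 — 5 statements merged into one kernel-verified Lean document; each statement's English description precedes it below -/
import Mathlib

section
/- Let T be a tree, 𝒯 a collection of subtrees of T, and k ≥ 0 an integer. If every subcollection 𝒯' ⊆ 𝒯 of size at most k+1 can be pierced by a set of at most k edges of T (i.e., there exist at most k edges of T such that every subtree in 𝒯' contains a vertex incident to one of these edges), then the whole collection 𝒯 can be pierced by at most k edges of T. -/
/-!
Root the tree at an endpoint `r` of some edge, and let `T₀ ∈ 𝒯` be a subtree whose vertex
closest to `r`, `v₀`, is as far from `r` as possible. Every vertex of `T₀` lies below `v₀`, and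
every other member of `𝒯` reaches at least as close to `r` as `v₀` does. Hence a member of `𝒯`
that meets an edge touching `T₀` must contain `v₀` or the parent of `v₀`: the single edge from
`v₀` towards the root pierces every member of `𝒯` that could share a piercing edge with `T₀`.
Removing the members it pierces, any `k + 1` of the remaining ones together with `T₀` are
pierced by `k + 1` edges, one of which is wasted on `T₀` alone, so induction on `k` applies.
-/

open Set SimpleGraph

namespace SimpleGraph

variable {V : Type*} {G : SimpleGraph V}

section Piercing

def Pierces (E : Set (Sym2 V)) (S : G.Subgraph) : Prop :=
  ∃ v ∈ S.verts, ∃ e ∈ E, v ∈ e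

def PierceableBy (G : SimpleGraph V) (k : ℕ) (𝒯 : Set G.Subgraph) : Prop :=
  ∃ E ⊆ G.edgeSet, E.Finite ∧ E.ncard ≤ k ∧ ∀ S ∈ 𝒯, Pierces E S

variable {E F : Set (Sym2 V)} {S T₀ : G.Subgraph} {𝒯 : Set G.Subgraph} {k : ℕ}

theorem Pierces.mono (h : Pierces E S) (hEF : E ⊆ F) : Pierces F S := by
  obtain ⟨v, hv, e, he, hve⟩ := h
  exact ⟨v, hv, e, hEF he, hve⟩

theorem pierceableBy_empty : PierceableBy G k ∅ :=
  ⟨∅, empty_subset _, finite_empty, by simp, by simp⟩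

theorem not_pierceableBy_zero_singleton : ¬ PierceableBy G 0 {S} := by
  rintro ⟨E, -, hEfin, hEcard, hE⟩
  obtain ⟨-, -, e, he, -⟩ := hE S rfl
  rw [(ncard_eq_zero hEfin).1 (Nat.le_zero.1 hEcard)] at he
  exact he

theorem pierceableBy_succ_of_unpierced {e₀ : Sym2 V} (he₀ : e₀ ∈ G.edgeSet)
    (h : PierceableBy G k {S ∈ 𝒯 | ¬ Pierces {e₀} S}) : PierceableBy G (k + 1) 𝒯 := by
  obtain ⟨E, hEG, hEfin, hEcard, hE⟩ := h
  refine ⟨insert e₀ E, insert_subset he₀ hEG, hEfin.insert e₀,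
    (ncard_insert_le _ _).trans (by omega), fun S hS => ?_⟩
  by_cases hS₀ : Pierces {e₀} S
  · exact hS₀.mono (singleton_subset_iff.2 (mem_insert _ _))
  · exact (hE S ⟨hS, hS₀⟩).mono (subset_insert _ _)

theorem PierceableBy.of_insert (h : PierceableBy G (k + 1) (insert T₀ 𝒯))
    (hT₀ : ∀ e ∈ G.edgeSet, Pierces {e} T₀ → ∀ S ∈ 𝒯, ¬ Pierces {e} S) :
    PierceableBy G k 𝒯 := by
  obtain ⟨E, hEG, hEfin, hEcard, hE⟩ := h
  obtain ⟨v, hv, e, he, hve⟩ := hE T₀ (mem_insert _ _)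
  refine ⟨E \ {e}, sdiff_subset.trans hEG, hEfin.sdiff, ?_, fun S hS => ?_⟩
  · have := ncard_sdiff_singleton_of_mem he
    omega
  · obtain ⟨x, hx, e', he', hxe'⟩ := hE S (mem_insert_of_mem _ hS)
    refine ⟨x, hx, e', ⟨he', ?_⟩, hxe'⟩
    rintro rfl
    exact hT₀ _ (hEG he) ⟨v, hv, _, rfl, hve⟩ S hS ⟨x, hx, _, rfl, hxe'⟩

end Piercing

section Between

def Between (G : SimpleGraph V) (x v y : V) : Prop :=
  ∀ w : G.Walk x y, v ∈ w.support

variable {x y v : V}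

theorem Subgraph.Connected.exists_isPath_support_subset {S : G.Subgraph} (hS : S.Connected)
    (hx : x ∈ S.verts) (hy : y ∈ S.verts) :
    ∃ p : G.Walk x y, p.IsPath ∧ ∀ z ∈ p.support, z ∈ S.verts := by
  classical
  obtain ⟨w⟩ := hS ⟨x, hx⟩ ⟨y, hy⟩
  refine ⟨(w.map S.hom).bypass, Walk.bypass_isPath _, fun z hz => ?_⟩
  obtain ⟨⟨z', hz'⟩, -, rfl⟩ := List.mem_map.1
    (Walk.support_map S.hom w ▸ (w.map S.hom).support_bypass_subset_support hz)
  exact hz'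

theorem Subgraph.Connected.mem_verts_of_between {S : G.Subgraph} (hS : S.Connected)
    (hx : x ∈ S.verts) (hy : y ∈ S.verts) (h : G.Between x v y) : v ∈ S.verts := by
  obtain ⟨p, -, hpS⟩ := hS.exists_isPath_support_subset hx hy
  exact hpS v (h p)

theorem IsAcyclic.between_of_mem_support (hG : G.IsAcyclic) {p : G.Walk x y} (hp : p.IsPath)
    (hv : v ∈ p.support) : G.Between x v y := fun w => by
  classical
  have : w.bypass = p :=
    congrArg Subtype.val ((hG.subsingleton_path x y).elim ⟨_, w.bypass_isPath⟩ ⟨p, hp⟩)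
  exact w.support_bypass_subset_support (this ▸ hv)

theorem Between.dist_add_dist (h : G.Between x v y) (hxy : G.Reachable x y) :
    G.dist x v + G.dist v y = G.dist x y := by
  classical
  obtain ⟨p, -, hp⟩ := hxy.exists_path_of_dist
  have hlen := congrArg Walk.length (p.take_spec (h p))
  rw [Walk.length_append] at hlen
  have := dist_le (p.takeUntil v (h p))
  have := dist_le (p.dropUntil v (h p))
  have := (p.takeUntil v (h p)).reachable.dist_triangle_left y
  omega

end Between

section RootedTree

variable {r : V}

theorem IsTree.between_of_isMinOn (hG : G.IsTree) {S : G.Subgraph} (hS : S.Connected) {t a : V}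
    (ht : t ∈ S.verts) (htop : IsMinOn (G.dist · r) S.verts t) (ha : a ∈ S.verts) :
    G.Between a t r := by
  obtain ⟨p, hp, hpS⟩ := hS.exists_isPath_support_subset ha ht
  obtain ⟨q, hq, -⟩ := (hG.connected t r).exists_path_of_dist
  refine hG.isAcyclic.between_of_mem_support (p := p.append q) ?_ (by simp)
  rw [Walk.isPath_def, Walk.support_append]
  refine hp.support_nodup.append hq.support_nodup.tail ?_
  intro y hyp hyq
  have hyt : y = t := by
    have hsum := (hG.isAcyclic.between_of_mem_support hq (List.mem_of_mem_tail hyq)).dist_add_dist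
      (hG.connected t r)
    have := isMinOn_iff.1 htop y (hpS y hyp)
    have : G.dist t y = 0 := by omega
    exact ((hG.connected.dist_eq_zero_iff).1 this).symm
  subst hyt
  have := hq.support_nodup
  rw [← Walk.cons_tail_support] at this
  exact (List.nodup_cons.1 this).1 hyq

theorem IsTree.mem_verts_of_between_of_dist_le (hG : G.IsTree) {S : G.Subgraph}
    (hS : S.Connected) {x t v : V} (hx : x ∈ S.verts) (ht : t ∈ S.verts) (hv : G.Between x v r)
    (hdist : G.dist t r ≤ G.dist v r) : v ∈ S.verts := by
  obtain ⟨p, hp, -⟩ := (hG.connected x t).exists_path_of_dist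
  obtain ⟨q, hq, -⟩ := (hG.connected t r).exists_path_of_dist
  rcases (Walk.mem_support_append_iff p q).1 (hv (p.append q)) with hvp | hvq
  · exact hS.mem_verts_of_between hx ht (hG.isAcyclic.between_of_mem_support hp hvp)
  · have := (hG.isAcyclic.between_of_mem_support hq hvq).dist_add_dist (hG.connected t r)
    have : G.dist t v = 0 := by omega
    rwa [← (hG.connected.dist_eq_zero_iff).1 this]

theorem IsTree.eq_snd_of_adj_of_not_between (hG : G.IsTree) {a x v : V} {q : G.Walk v r}
    (hq : q.IsPath) (hav : G.Between a v r) (hax : G.Adj a x) (hxv : ¬ G.Between x v r) :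
    x = q.snd := by
  obtain ⟨p, hp, -⟩ := (hG.connected x r).exists_path_of_dist
  have hvp : v ∉ p.support := fun h => hxv (hG.isAcyclic.between_of_mem_support hp h)
  obtain rfl : a = v := by
    simpa [hvp, eq_comm] using hav (.cons hax p)
  have : Walk.cons hax p = q := congrArg Subtype.val
    ((hG.isAcyclic.subsingleton_path a r).elim ⟨_, hp.cons hvp⟩ ⟨q, hq⟩)
  rw [← this, Walk.snd_cons]

theorem IsTree.mem_verts_or_snd_mem_verts_of_pierces (hG : G.IsTree) {T₀ S : G.Subgraph}
    (hT₀ : T₀.Connected) (hS : S.Connected) {v₀ t : V} (hv₀ : v₀ ∈ T₀.verts)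
    (htop : IsMinOn (G.dist · r) T₀.verts v₀) (ht : t ∈ S.verts)
    (hdist : G.dist t r ≤ G.dist v₀ r) {q : G.Walk v₀ r} (hq : q.IsPath)
    {e : Sym2 V} (he : e ∈ G.edgeSet) (heT₀ : Pierces {e} T₀) (heS : Pierces {e} S) :
    v₀ ∈ S.verts ∨ q.snd ∈ S.verts := by
  obtain ⟨a, ha, _, rfl, hae⟩ := heT₀
  obtain ⟨x, hx, _, hee, hxe⟩ := heS
  subst hee
  have hav := hG.between_of_isMinOn hT₀ hv₀ htop ha
  by_cases hxv : G.Between x v₀ r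
  · exact .inl (hG.mem_verts_of_between_of_dist_le hS hx ht hxv hdist)
  · have hxa : x ≠ a := by
      rintro rfl
      exact hxv hav
    -- the edge `s(a, x)` leaves the part of the tree below `v₀`, which only `s(v₀, q.snd)` does
    have hax : G.Adj a x := by rwa [(Sym2.mem_and_mem_iff hxa.symm).1 ⟨hae, hxe⟩] at he
    exact .inr (hG.eq_snd_of_adj_of_not_between hq hav hax hxv ▸ hx)

theorem IsTree.exists_dominating_edge [Finite V] (hG : G.IsTree) {r' : V} (hrr' : G.Adj r r')
    {𝒯 : Set G.Subgraph} (h𝒯 : ∀ S ∈ 𝒯, S.Connected) (hne : 𝒯.Nonempty) :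
    ∃ T₀ ∈ 𝒯, ∃ e₀ ∈ G.edgeSet, ∀ S ∈ 𝒯, ∀ e ∈ G.edgeSet,
      Pierces {e} T₀ → Pierces {e} S → Pierces {e₀} S := by
  have htop (S) (hS : S ∈ 𝒯) : ∃ t ∈ S.verts, IsMinOn (G.dist · r) S.verts t := by
    obtain ⟨t, ht, hmin⟩ :=
      S.verts.exists_min_image (G.dist · r) S.verts.toFinite (h𝒯 S hS).nonempty
    exact ⟨t, ht, isMinOn_iff.2 hmin⟩
  have : Nonempty V := ⟨r⟩
  choose! top htop_mem htop_min using htop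
  obtain ⟨T₀, hT₀, hmax⟩ := 𝒯.exists_max_image (fun S => G.dist (top S) r) 𝒯.toFinite hne
  obtain ⟨q, hq, -⟩ := (hG.connected (top T₀) r).exists_path_of_dist
  have key (S) (hS : S ∈ 𝒯) (e) (he : e ∈ G.edgeSet) (heT₀ : Pierces {e} T₀)
      (heS : Pierces {e} S) : top T₀ ∈ S.verts ∨ q.snd ∈ S.verts :=
    hG.mem_verts_or_snd_mem_verts_of_pierces (h𝒯 T₀ hT₀) (h𝒯 S hS) (htop_mem T₀ hT₀)
      (htop_min T₀ hT₀) (htop_mem S hS) (hmax S hS) hq he heT₀ heS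
  refine ⟨T₀, hT₀, ?_⟩
  by_cases hnil : q.Nil
  · refine ⟨s(r, r'), hrr', fun S hS e he heT₀ heS => ⟨r, ?_, _, rfl, Sym2.mem_mk_left _ _⟩⟩
    have hsnd : q.snd = r := q.getVert_of_length_le (by simp [Walk.length_eq_zero_iff.2 hnil])
    simpa [hnil.eq, hsnd] using key S hS e he heT₀ heS
  · refine ⟨s(top T₀, q.snd), q.adj_snd hnil, fun S hS e he heT₀ heS => ?_⟩
    rcases key S hS e he heT₀ heS with h | h
    · exact ⟨_, h, _, rfl, Sym2.mem_mk_left _ _⟩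
    · exact ⟨_, h, _, rfl, Sym2.mem_mk_right _ _⟩

end RootedTree

end SimpleGraph

/-- **Edge Helly Theorem.** Let `T` be a tree, `𝒯` a collection of subtrees of `T`
(connected subgraphs), and `k ≥ 0`. If every subcollection of `𝒯` of size at most `k+1`
can be pierced by at most `k` edges of `T`, then `𝒯` can be pierced by at most `k`
edges of `T`. -/
theorem edge_helly_for_trees {V : Type*} [Fintype V] (T : SimpleGraph V) (hT : T.IsTree)
    (𝒯 : Set T.Subgraph) (h𝒯 : ∀ T' ∈ 𝒯, T'.Connected) (k : ℕ)
    (h : ∀ 𝒯' ⊆ 𝒯, 𝒯'.Finite → 𝒯'.ncard ≤ k + 1 →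
      ∃ E ⊆ T.edgeSet, E.Finite ∧ E.ncard ≤ k ∧
        ∀ T' ∈ 𝒯', ∃ v ∈ T'.verts, ∃ e ∈ E, v ∈ e) :
    ∃ E ⊆ T.edgeSet, E.Finite ∧ E.ncard ≤ k ∧
      ∀ T' ∈ 𝒯, ∃ v ∈ T'.verts, ∃ e ∈ E, v ∈ e := by
  induction k generalizing 𝒯 with
  | zero =>
    obtain rfl : 𝒯 = ∅ := eq_empty_of_forall_notMem fun S hS =>
      not_pierceableBy_zero_singleton
        (h {S} (singleton_subset_iff.2 hS) (finite_singleton S) (by simp))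
    exact pierceableBy_empty
  | succ k ih =>
    obtain rfl | ⟨S, hS⟩ := 𝒯.eq_empty_or_nonempty
    · exact pierceableBy_empty
    obtain ⟨E, hET, -, -, hE⟩ := h {S} (singleton_subset_iff.2 hS) (finite_singleton S) (by simp)
    obtain ⟨-, -, e, he, -⟩ := hE S rfl
    obtain ⟨r, r', hrr'⟩ : ∃ r r', T.Adj r r' := e.ind (fun r r' h => ⟨r, r', h⟩) (hET he)
    obtain ⟨T₀, hT₀, e₀, he₀, hdom⟩ := hT.exists_dominating_edge hrr' h𝒯 ⟨S, hS⟩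
    refine pierceableBy_succ_of_unpierced he₀ (ih _ (fun S hS => h𝒯 S hS.1) ?_)
    intro 𝒯' h𝒯' hfin hcard
    refine PierceableBy.of_insert (T₀ := T₀) ?_ fun e he heT₀ S hS heS => (h𝒯' hS).2 ?_
    · exact h _ (insert_subset hT₀ (h𝒯'.trans (sep_subset _ _))) (hfin.insert T₀)
        ((ncard_insert_le _ _).trans (by omega))
    · exact hdom S (h𝒯' hS).1 e he heT₀ heS
end

section
/- For any finite graphs H and G, there exists a set Φ of monomorphisms of H into G that is distinguishing and has size at least v(H)^{-v(H)} · mon(H,G). -/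
/-!
Colour `V(G)` with the vertices of `H` uniformly at random, i.e. pick `c : V(G) → V(H)`.
The monomorphisms `f` with `c ∘ f = id` form a distinguishing family, since `f x = g y`
forces `x = c (f x) = c (g y) = y`. A fixed monomorphism satisfies `c ∘ f = id` for exactly a
`v(H)^{-v(H)}` fraction of all colourings, so some colouring retains at least that fraction of
all monomorphisms.
-/

section Retractions

open Finset

variable {α β γ : Type*}

theorem forall_apply_eq_iff_restrict_range_eq {f : α → β} (hf : Function.Injective f)
    (g : α → γ) (c : β → γ) :
    (∀ x, c (f x) = g x) ↔
      (fun y : Set.range f => c y) = g ∘ (Equiv.ofInjective f hf).symm := by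
  rw [funext_iff, ← (Equiv.ofInjective f hf).forall_congr_right]
  simp

theorem Nat.card_extensions_mul [Finite β] {f : α → β} (hf : Function.Injective f)
    (g : α → γ) :
    Nat.card {c : β → γ // ∀ x, c (f x) = g x} * Nat.card γ ^ Nat.card α =
      Nat.card γ ^ Nat.card β := by
  classical
  let g' := g ∘ (Equiv.ofInjective f hf).symm
  have e : {c : β → γ // ∀ x, c (f x) = g x} ≃ ({y // y ∉ Set.range f} → γ) :=
    ((Equiv.piEquivPiSubtypeProd (· ∈ Set.range f) fun _ => γ).subtypeEquiv
        (q := fun p => p.1 = g') fun c => forall_apply_eq_iff_restrict_range_eq hf g c).trans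
      (Equiv.prodSubtypeFstEquivSubtypeProd.trans (Equiv.uniqueProd _ {a // a = g'}))
  rw [Nat.card_congr e, Nat.card_fun, Nat.card_congr (Equiv.ofInjective f hf), ← pow_add,
    add_comm, ← Nat.card_sum, Nat.card_congr (Equiv.sumCompl (· ∈ Set.range f))]

theorem exists_card_le_card_filter_retraction_mul {ι : Type*} [Fintype α] [Nonempty α]
    [Fintype β] [DecidableEq α] (s : Finset ι) (F : ι → α → β)
    (hF : ∀ i ∈ s, Function.Injective (F i)) :
    ∃ c : β → α, #s ≤ #{i ∈ s | ∀ x, c (F i x) = x} * Fintype.card α ^ Fintype.card α := by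
  classical
  set n := Fintype.card α
  have hfiber : ∀ i ∈ s, #{c : β → α | ∀ x, c (F i x) = x} * n ^ n = n ^ Fintype.card β := by
    intro i hi
    simpa [← Fintype.card_subtype, n] using Nat.card_extensions_mul (hF i hi) id
  have hsum : ∑ _c : β → α, #s = ∑ c : β → α, #{i ∈ s | ∀ x, c (F i x) = x} * n ^ n :=
    calc ∑ _c : β → α, #s = ∑ i ∈ s, #{c : β → α | ∀ x, c (F i x) = x} * n ^ n := by
          rw [sum_congr rfl hfiber, sum_const, sum_const, card_univ, Fintype.card_fun,
            smul_eq_mul, smul_eq_mul, mul_comm]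
      _ = ∑ c : β → α, #{i ∈ s | ∀ x, c (F i x) = x} * n ^ n := by
          rw [← sum_mul, ← sum_mul]
          congr 1
          exact (sum_card_bipartiteAbove_eq_sum_card_bipartiteBelow
            (fun (c : β → α) i => ∀ x, c (F i x) = x) (s := univ) (t := s)).symm
  obtain ⟨c, -, hc⟩ := exists_le_of_sum_le univ_nonempty hsum.le
  exact ⟨c, hc⟩

end Retractions

/-- For any finite graphs `H` and `G`, there exists a distinguishing set `Φ` of
monomorphisms of `H` into `G` of size at least `v(H)^{-v(H)} · mon(H,G)`, i.e. with
`mon(H,G) ≤ |Φ| · v(H)^{v(H)}`. -/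
theorem exists_large_distinguishing_family {α β : Type*} [Fintype α] [Fintype β]
    (H : SimpleGraph α) (G : SimpleGraph β) :
    ∃ Φ : Set (H →g G), (∀ f ∈ Φ, Function.Injective f) ∧
      (∀ f ∈ Φ, ∀ g ∈ Φ, ∀ x y : α, x ≠ y → f x ≠ g y) ∧
      Nat.card {f : H →g G // Function.Injective f} ≤
        Φ.ncard * (Fintype.card α) ^ (Fintype.card α) := by
  classical
  have := Fintype.ofFinite (H →g G)
  let mono := Finset.univ.filter fun f : H →g G => Function.Injective f
  have hmono : Nat.card {f : H →g G // Function.Injective f} = mono.card := by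
    rw [Nat.card_eq_fintype_card, Fintype.card_subtype]
  cases isEmpty_or_nonempty α
  · refine ⟨mono, by simp [mono], fun f _ g _ x => isEmptyElim x, ?_⟩
    rw [hmono, Fintype.card_eq_zero, pow_zero, mul_one, Set.ncard_coe_finset]
  obtain ⟨c, hc⟩ := exists_card_le_card_filter_retraction_mul mono (⇑) (by simp [mono])
  let Φ := mono.filter fun f => ∀ x, c (f x) = x
  have hΦ : ∀ f ∈ Φ, Function.Injective f ∧ ∀ x, c (f x) = x := by simp [Φ, mono]
  refine ⟨Φ, fun f hf => (hΦ f hf).1, fun f hf g hg x y hxy hfg => hxy ?_,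
    by rwa [Set.ncard_coe_finset, hmono]⟩
  rw [← (hΦ f hf).2 x, hfg, (hΦ g hg).2 y]
end

section
/- For every graph H and integer q ≥ 2, there exists an integer Q = Q(H,q) ≥ q such that: if G is a graph and Φ is a set of monomorphisms of H into G with |Φ| ≥ Q, then there exist a proper subset R ⊊ V(H) and distinct maps φ₁,…,φ_q ∈ Φ such that for all i ≠ j and all x, y ∈ V(H), φ_i(x) = φ_j(y) if and only if x = y and x ∈ R. -/
/-!
Only `n ^ n` injections of an `n`-set share an image, so many injections have many distinct images,
and by Erdős–Rado `p` of these form a sunflower with core `C`. Sorting maps onto the petals by their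
restriction to the preimage of `C` leaves `q` maps with the same restriction, hence the same
preimage `R` of `C`. Two of them can only meet in `C`, where they agree, so `φ i x = φ j y` forces
`x = y ∈ R`; and `R ≠ univ`, since otherwise two of the maps would coincide.
-/

open Finset Function

namespace Finset

variable {β : Type*} [DecidableEq β]

def IsSunflower (P : Finset (Finset β)) (C : Finset β) : Prop :=
  (P : Set (Finset β)).Pairwise fun s t => s ∩ t = C

theorem exists_pairwiseDisjoint_or_exists_transversal (F : Finset (Finset β)) (n p : ℕ)
    (hF : ∀ s ∈ F, s.Nonempty ∧ #s ≤ n) :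
    (∃ P ⊆ F, #P = p ∧ (P : Set (Finset β)).PairwiseDisjoint id) ∨
      ∃ U : Finset β, #U ≤ n * (p - 1) ∧ ∀ s ∈ F, ¬Disjoint s U := by
  classical
  set D := F.powerset.filter fun M : Finset (Finset β) => (M : Set (Finset β)).PairwiseDisjoint id
  obtain ⟨M, hM, hmax⟩ := exists_max_image D card ⟨∅, by simp [D]⟩
  rw [mem_filter, mem_powerset] at hM
  obtain ⟨hMF, hMdisj⟩ := hM
  by_cases hp : p ≤ #M
  · obtain ⟨P, hPM, rfl⟩ := exists_subset_card_eq hp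
    exact .inl ⟨P, hPM.trans hMF, rfl, hMdisj.subset (coe_subset.2 hPM)⟩
  refine .inr ⟨M.biUnion id, ?_, fun s hs hdisj => ?_⟩
  · calc #(M.biUnion id) ≤ ∑ s ∈ M, #s := card_biUnion_le
      _ ≤ ∑ _s ∈ M, n := sum_le_sum fun s hs => (hF s (hMF hs)).2
      _ = n * #M := by rw [sum_const, smul_eq_mul, mul_comm]
      _ ≤ n * (p - 1) := by gcongr; omega
  have hsM : s ∉ M := fun hsM =>
    (hF s hs).1.ne_empty (disjoint_self.1 (hdisj.mono_right (subset_biUnion_of_mem id hsM)))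
  have hins : insert s M ∈ D := by
    rw [mem_filter, mem_powerset, coe_insert]
    exact ⟨insert_subset hs hMF,
      hMdisj.insert fun t ht _ => hdisj.mono_right (subset_biUnion_of_mem id ht)⟩
  have := hmax _ hins
  rw [card_insert_of_notMem hsM] at this
  omega

theorem exists_lt_card_filter_mem_of_forall_not_disjoint {F : Finset (Finset β)} {U : Finset β}
    {m : ℕ} (hU : ∀ s ∈ F, ¬Disjoint s U) (hF : #U * m < #F) :
    ∃ x ∈ U, m < #{s ∈ F | x ∈ s} := by
  by_contra! h
  have hcover : F ⊆ U.biUnion fun x => {s ∈ F | x ∈ s} := fun s hs => by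
    obtain ⟨x, hxs, hxU⟩ := not_disjoint_iff.1 (hU s hs)
    exact mem_biUnion.2 ⟨x, hxU, mem_filter.2 ⟨hs, hxs⟩⟩
  have := (card_le_card hcover).trans (card_biUnion_le.trans (sum_le_sum h))
  rw [sum_const, smul_eq_mul] at this
  omega

theorem exists_insert_sunflower_of_subset_image_erase {F P' : Finset (Finset β)} {x : β}
    (hP' : P' ⊆ {s ∈ F | x ∈ s}.image (erase · x)) {C : Finset β}
    (hC : IsSunflower P' C) : ∃ P ⊆ F, #P = #P' ∧ IsSunflower P (insert x C) := by
  have hx : ∀ t ∈ P', x ∉ t ∧ insert x t ∈ F := fun t ht => by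
    obtain ⟨s, hs, rfl⟩ := mem_image.1 (hP' ht)
    rw [mem_filter] at hs
    exact ⟨notMem_erase x s, by rw [insert_erase hs.2]; exact hs.1⟩
  have hinj : Set.InjOn (insert x) (P' : Set (Finset β)) := fun s hs t ht hst => by
    rw [← erase_insert (hx s hs).1, ← erase_insert (hx t ht).1, hst]
  refine ⟨P'.image (insert x), fun s hs => ?_, card_image_of_injOn hinj, ?_⟩
  · obtain ⟨t, ht, rfl⟩ := mem_image.1 hs
    exact (hx t ht).2
  · rw [IsSunflower, coe_image, hinj.pairwise_image]
    intro s hs t ht hst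
    simp only [onFun, ← insert_inter_distrib, hC hs ht hst]

theorem exists_sunflower (n p : ℕ) (F : Finset (Finset β)) (hF : ∀ s ∈ F, #s = n)
    (hFcard : n.factorial * (p - 1) ^ n < #F) :
    ∃ P ⊆ F, #P = p ∧ ∃ C, IsSunflower P C := by
  induction n generalizing F with
  | zero =>
    have := card_le_card fun s hs => mem_singleton.2 (card_eq_zero.1 (hF s hs))
    simp only [card_singleton, Nat.factorial_zero, pow_zero, mul_one] at hFcard this
    omega
  | succ n ih =>
    obtain ⟨P, hPF, hP, hdisj⟩ | ⟨U, hU, hmeet⟩ :=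
      exists_pairwiseDisjoint_or_exists_transversal F (n + 1) p
        fun s hs => ⟨card_pos.1 (by rw [hF s hs]; omega), (hF s hs).le⟩
    · exact ⟨P, hPF, hP, ∅, fun s hs t ht hst => disjoint_iff_inter_eq_empty.1 (hdisj hs ht hst)⟩
    obtain ⟨x, -, hx⟩ := exists_lt_card_filter_mem_of_forall_not_disjoint hmeet <|
      calc #U * (n.factorial * (p - 1) ^ n)
          ≤ (n + 1) * (p - 1) * (n.factorial * (p - 1) ^ n) := by gcongr
        _ = (n + 1).factorial * (p - 1) ^ (n + 1) := by rw [Nat.factorial_succ, pow_succ]; ring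
        _ < #F := hFcard
    have hinj : Set.InjOn (erase · x) ({s ∈ F | x ∈ s} : Finset (Finset β)) :=
      (erase_injOn' x).mono fun s hs => (mem_filter.1 hs).2
    have hlink : ∀ t ∈ {s ∈ F | x ∈ s}.image (erase · x), #t = n := fun t ht => by
      obtain ⟨s, hs, rfl⟩ := mem_image.1 ht
      rw [mem_filter] at hs
      rw [card_erase_of_mem hs.2, hF s hs.1, add_tsub_cancel_right]
    obtain ⟨P', hP'L, hP', C, hC⟩ := ih _ hlink (by rwa [card_image_of_injOn hinj])
    obtain ⟨P, hPF, hP, hPC⟩ := exists_insert_sunflower_of_subset_image_erase hP'L hC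
    exact ⟨P, hPF, hP.trans hP', _, hPC⟩

end Finset

section CoreTrace

variable {α β : Type*} [DecidableEq β]

def coreTrace (C : Finset β) (f : α → β) (a : α) : Option β :=
  if f a ∈ C then some (f a) else none

variable {C : Finset β} {f g : α → β}

theorem apply_eq_of_coreTrace_eq (h : coreTrace C f = coreTrace C g) {a : α} (ha : f a ∈ C) :
    g a = f a := by
  have := congrFun h a
  simp only [coreTrace, if_pos ha] at this
  split_ifs at this
  exact (Option.some_injective _ this).symm

theorem mem_iff_of_coreTrace_eq (h : coreTrace C f = coreTrace C g) (a : α) :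
    f a ∈ C ↔ g a ∈ C :=
  ⟨fun ha => apply_eq_of_coreTrace_eq h ha ▸ ha, fun ha => apply_eq_of_coreTrace_eq h.symm ha ▸ ha⟩

theorem apply_eq_apply_iff_of_coreTrace_eq (hg : Injective g)
    (hC : ∀ x y, f x = g y → f x ∈ C) (h : coreTrace C f = coreTrace C g) (x y : α) :
    f x = g y ↔ x = y ∧ f x ∈ C := by
  constructor
  · intro hxy
    have hx := hC x y hxy
    exact ⟨hg ((apply_eq_of_coreTrace_eq h hx).trans hxy), hx⟩
  · rintro ⟨rfl, hx⟩
    exact (apply_eq_of_coreTrace_eq h hx).symm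

theorem coreTrace_mem_piFinset [Fintype α] [DecidableEq α] (C : Finset β) (f : α → β) :
    coreTrace C f ∈ Fintype.piFinset fun _ => C.insertNone := by
  refine Fintype.mem_piFinset.2 fun a => ?_
  unfold coreTrace
  split_ifs with ha
  · exact Finset.some_mem_insertNone.2 ha
  · exact Finset.none_mem_insertNone

theorem exists_injective_coreTrace_eq [Fintype α] {ι : Type*} [Fintype ι] (C : Finset β)
    (ψ : ι → α → β) {q : ℕ} (h : (#C + 1) ^ Fintype.card α * (q - 1) < Fintype.card ι) :
    ∃ e : Fin q → ι, Injective e ∧ ∀ i j, coreTrace C (ψ (e i)) = coreTrace C (ψ (e j)) := by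
  classical
  obtain ⟨τ, -, hτ⟩ := exists_lt_card_fiber_of_mul_lt_card_of_maps_to
    (s := univ) (fun k _ => coreTrace_mem_piFinset C (ψ k))
    (by simpa [Fintype.card_piFinset, card_insertNone] using h)
  obtain ⟨e⟩ := Function.Embedding.nonempty_of_card_le
    (α := Fin q) (β := ({k | coreTrace C (ψ k) = τ} : Finset ι))
    (by rw [Fintype.card_fin, Fintype.card_coe]; omega)
  refine ⟨fun i => e i, Subtype.val_injective.comp e.injective, fun i j => ?_⟩
  rw [(mem_filter.1 (e i).2).2, (mem_filter.1 (e j).2).2]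

end CoreTrace

section Injections

variable {α β F : Type*} [Fintype α] [FunLike F α β]

theorem card_le_card_pow_mul_card_image_range [DecidableEq β] (Φ : Finset F) :
    #Φ ≤ Fintype.card α ^ Fintype.card α * #(Φ.image fun f : F => univ.image ⇑f) := by
  classical
  refine card_le_mul_card_image Φ _ fun S hS => ?_
  obtain ⟨f₀, -, rfl⟩ := mem_image.1 hS
  have hmaps : ∀ f ∈ Φ.filter fun f : F => univ.image ⇑f = univ.image ⇑f₀,
      ⇑f ∈ Fintype.piFinset fun _ : α => univ.image ⇑f₀ := fun f hf =>
    Fintype.mem_piFinset.2 fun a => (mem_filter.1 hf).2 ▸ mem_image_of_mem _ (mem_univ a)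
  calc _ ≤ #(Fintype.piFinset fun _ : α => univ.image ⇑f₀) :=
        card_le_card_of_injOn _ hmaps DFunLike.coe_injective.injOn
    _ = #(univ.image ⇑f₀) ^ Fintype.card α := by simp
    _ ≤ Fintype.card α ^ Fintype.card α := by gcongr; exact card_image_le

/-- The Erdős–Rado bound for `p = (n + 1) ^ n * (q - 1) + 1` petals, times the `n ^ n` injections
sharing an image; `(n + 1) ^ n` bounds the number of traces on a core. -/
def sunflowerBound (n q : ℕ) : ℕ :=
  n ^ n * (n.factorial * ((n + 1) ^ n * (q - 1)) ^ n)

theorem exists_sunflower_of_injective {q : ℕ} (hq : 2 ≤ q) (Φ : Finset F)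
    (hΦ : ∀ f ∈ Φ, Injective f) (hcard : sunflowerBound (Fintype.card α) q < #Φ) :
    ∃ R : Set α, R ≠ Set.univ ∧
      ∃ φ : Fin q → F, (∀ i, φ i ∈ Φ) ∧ Injective φ ∧
        ∀ i j : Fin q, i ≠ j → ∀ x y : α, φ i x = φ j y ↔ x = y ∧ x ∈ R := by
  classical
  set n := Fintype.card α
  set p := (n + 1) ^ n * (q - 1) + 1
  have hpetal_card : ∀ S ∈ Φ.image fun f : F => univ.image ⇑f, #S = n := fun S hS => by
    obtain ⟨f, hf, rfl⟩ := mem_image.1 hS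
    rw [card_image_of_injective _ (hΦ f hf), card_univ]
  have hpetals : n.factorial * (p - 1) ^ n < #(Φ.image fun f : F => univ.image ⇑f) :=
    lt_of_mul_lt_mul_left (hcard.trans_le (card_le_card_pow_mul_card_image_range Φ))
      (Nat.zero_le _)
  obtain ⟨P, hPΦ, hP, C, hC⟩ := exists_sunflower n p _ hpetal_card hpetals
  have hpreimage : ∀ S : P, ∃ f ∈ Φ, univ.image ⇑f = S := fun S => by
    simpa using hPΦ S.2
  choose ψ hψΦ hψS using hpreimage
  have hC_card : #C ≤ n := by
    have : 0 < (n + 1) ^ n * (q - 1) := Nat.mul_pos (by positivity) (by omega)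
    obtain ⟨s, hs, t, ht, hst⟩ := one_lt_card.1 (show 1 < #P by omega)
    rw [← hC hs ht hst, ← hpetal_card s (hPΦ hs)]
    exact card_le_card inter_subset_left
  obtain ⟨e, he, htrace⟩ := exists_injective_coreTrace_eq C (fun S => ⇑(ψ S)) (q := q) <|
    calc (#C + 1) ^ n * (q - 1) ≤ (n + 1) ^ n * (q - 1) := by gcongr
      _ < Fintype.card P := by rw [Fintype.card_coe, hP]; omega
  let φ := fun i => ψ (e i)
  have hmeet : ∀ i j, i ≠ j → ∀ x y, φ i x = φ j y → φ i x ∈ C := by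
    intro i j hij x y hxy
    rw [← hC (e i).2 (e j).2 (Subtype.coe_ne_coe.2 (he.ne hij)), mem_inter,
      ← hψS (e i), ← hψS (e j), hxy]
    exact ⟨hxy ▸ mem_image_of_mem _ (mem_univ x), mem_image_of_mem _ (mem_univ y)⟩
  have hφ : Injective φ := fun i j hij => he (Subtype.ext (by rw [← hψS, ← hψS]; simp [φ, hij]))
  let i₀ : Fin q := ⟨0, by omega⟩
  refine ⟨{x | φ i₀ x ∈ C}, fun hR => ?_, φ, fun i => hψΦ _, hφ, fun i j hij x y => ?_⟩
  · let i₁ : Fin q := ⟨1, by omega⟩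
    have : φ i₀ = φ i₁ := DFunLike.coe_injective <| funext fun x =>
      (apply_eq_of_coreTrace_eq (htrace i₀ i₁) (Set.eq_univ_iff_forall.1 hR x)).symm
    exact absurd (hφ this) (by simp [i₀, i₁, Fin.ext_iff])
  · rw [apply_eq_apply_iff_of_coreTrace_eq (hΦ _ (hψΦ _)) (hmeet i j hij) (htrace i j),
      mem_iff_of_coreTrace_eq (htrace i i₀)]
    rfl

end Injections

/-- Sunflower lemma for monomorphisms: for every graph `H` and `q ≥ 2` there exists
`Q ≥ q` such that any collection `Φ` of at least `Q` monomorphisms of `H` into a graph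
`G` contains `q` distinct maps `φ₁, …, φ_q` and a proper subset `R ⊊ V(H)` with
`φ_i(x) = φ_j(y) ↔ x = y ∧ x ∈ R` for all `i ≠ j`. -/
theorem sunflower_for_monomorphisms {α : Type} [Fintype α] (H : SimpleGraph α)
    (q : ℕ) (hq : 2 ≤ q) :
    ∃ Q : ℕ, q ≤ Q ∧
      ∀ (β : Type) (G : SimpleGraph β) (Φ : Set (H →g G)),
        (∀ f ∈ Φ, Function.Injective f) → Q ≤ Φ.ncard →
        ∃ R : Set α, R ≠ Set.univ ∧
          ∃ φ : Fin q → (H →g G), (∀ i, φ i ∈ Φ) ∧ Function.Injective φ ∧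
            ∀ i j : Fin q, i ≠ j → ∀ x y : α, (φ i) x = (φ j) y ↔ x = y ∧ x ∈ R := by
  refine ⟨max q (sunflowerBound (Fintype.card α) q + 1), le_max_left _ _,
    fun β G Φ hΦ hcard => ?_⟩
  have hfin : Φ.Finite := Set.finite_of_ncard_pos (by omega)
  rw [Set.ncard_eq_toFinset_card Φ hfin] at hcard
  obtain ⟨R, hR, φ, hφΦ, hφ, hφR⟩ := exists_sunflower_of_injective hq hfin.toFinset
    (fun f hf => hΦ f (hfin.mem_toFinset.1 hf)) (by omega)
  exact ⟨R, hR, φ, fun i => hfin.mem_toFinset.1 (hφΦ i), hφ, hφR⟩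
end

section
/- Let k ≥ 2 and t be integers and let P_t be the path on vertices 1,…,t. Suppose T₁,…,T_{2k} are subpaths of P_t, T_i = [ℓ_i,r_i], satisfying the nice-tuple conditions with associated matching (i.e., there exist x₁<⋯<x_{2k} forming a matching with x_i ∈ V(T_i) \ ⋃_{j≠i}V(T_j)). If t ≢ 2 (mod k−1), then there exists an index i* with 1 < i* < 2k such that |V(T_{i*})| ≤ (t−3)/(k−1) − 1. -/
/-! Between the right ends `x₁ < x₃ < ⋯ < x_{2k-1}` of consecutive matching edges lies a whole inner
path: `T_{2m+1}` starts at `x_{2m+1}` (it cannot contain `x_{2m}`) and ends before `x_{2m+2}`, so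
`x_{2m+3} - x_{2m+1} ≥ |T_{2m+1}| + 1`. If all inner paths were long, each of these `k - 1` gaps
would be at least `(t - 2)/(k - 1)`, while together they fit into `[2, t]`. Hence every gap is exactly
`(t - 2)/(k - 1)`, which forces `k - 1 ∣ t - 2`. -/

open Finset

lemma dvd_of_le_mul_increments {n c : ℕ} (hn : 0 < n) {y : ℕ → ℕ} (hy : Monotone y)
    (hstep : ∀ m < n, c ≤ n * (y (m + 1) - y m)) (hspan : y n - y 0 ≤ c) : n ∣ c := by
  have hsum : ∑ m ∈ range n, n * (y (m + 1) - y m) = ∑ _m ∈ range n, c := by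
    refine le_antisymm ?_ (sum_le_sum fun m hm => hstep m (mem_range.mp hm))
    rw [← mul_sum, sum_range_tsub hy, sum_const, card_range, smul_eq_mul]
    exact Nat.mul_le_mul_left n hspan
  exact ⟨_, (sum_eq_sum_iff_of_le fun m hm => hstep m (mem_range.mp hm)).mp hsum.symm 0
    (mem_range.mpr hn)⟩

section NiceTuple

variable {ι : Type*} [Preorder ι] {ℓ r x : ι → ℕ} (hx : StrictMono x)
  (hmem : ∀ i, ℓ i ≤ x i ∧ x i ≤ r i) (hnot : ∀ i j, i ≠ j → ¬(ℓ j ≤ x i ∧ x i ≤ r j))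
include hx hmem hnot

lemma lt_left_of_lt {i j : ι} (hij : i < j) : x i < ℓ j := by
  by_contra! h
  exact hnot i j hij.ne ⟨h, ((hx hij).trans_le (hmem j).2).le⟩

lemma right_lt_of_lt {i j : ι} (hij : i < j) : r i < x j := by
  by_contra! h
  exact hnot j i hij.ne' ⟨(hmem i).1.trans (hx hij).le, h⟩

/-- The path `T_b` lies strictly between the matching edges `x_a x_b` and `x_c x_d`. -/
lemma card_add_one_le_sub {a b c d : ι} (hab : a < b) (hbc : b < c)
    (hxb : x b = x a + 1) (hxd : x d = x c + 1) : r b - ℓ b + 2 ≤ x d - x b := by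
  have := lt_left_of_lt hx hmem hnot hab
  have := right_lt_of_lt hx hmem hnot hbc
  have := hmem b
  omega

end NiceTuple

lemma card_add_one_le_sub_of_odd {k : ℕ} {ℓ r x : Fin (2 * k) → ℕ} (hx : StrictMono x)
    (hmem : ∀ i, ℓ i ≤ x i ∧ x i ≤ r i) (hnot : ∀ i j, i ≠ j → ¬(ℓ j ≤ x i ∧ x i ≤ r j))
    (hmatch : ∀ i : Fin (2 * k), (i : ℕ) % 2 = 0 →
      ∀ hi : (i : ℕ) + 1 < 2 * k, x ⟨(i : ℕ) + 1, hi⟩ = x i + 1)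
    (m : ℕ) (hm : 2 * m + 3 < 2 * k) :
    r ⟨2 * m + 1, by omega⟩ - ℓ ⟨2 * m + 1, by omega⟩ + 2 ≤
      x ⟨2 * m + 3, hm⟩ - x ⟨2 * m + 1, by omega⟩ :=
  card_add_one_le_sub hx hmem hnot (a := ⟨2 * m, by omega⟩)
    (Fin.mk_lt_mk.mpr (Nat.lt_succ_self _)) (Fin.mk_lt_mk.mpr (Nat.lt_succ_self _))
    (hmatch ⟨2 * m, by omega⟩ (by simp) (show 2 * m + 1 < 2 * k by omega))
    (hmatch ⟨2 * m + 2, by omega⟩ (by simp) (by omega : 2 * m + 2 + 1 < 2 * k))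

theorem nice_tuple_has_small_tree_general (k t : ℕ) (hk : 2 ≤ k)
    (ℓ r x : Fin (2 * k) → ℕ)
    (hran : ∀ i, 1 ≤ ℓ i ∧ r i ≤ t)
    (hxmono : StrictMono x)
    (hmatch : ∀ i : Fin (2 * k), (i : ℕ) % 2 = 0 →
      ∀ hi : (i : ℕ) + 1 < 2 * k, x ⟨(i : ℕ) + 1, hi⟩ = x i + 1)
    (hmem : ∀ i, ℓ i ≤ x i ∧ x i ≤ r i)
    (hnot : ∀ i j, i ≠ j → ¬(ℓ j ≤ x i ∧ x i ≤ r j))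
    (hmod : t % (k - 1) ≠ 2 % (k - 1)) :
    ∃ i : Fin (2 * k), 0 < (i : ℕ) ∧ (i : ℕ) < 2 * k - 1 ∧
      (r i - ℓ i + 2) * (k - 1) ≤ t - 3 := by
  by_contra! hlong
  -- `y m = x_{2m+1}`, clamped at the last index so that `y` is monotone on all of `ℕ`
  let y : ℕ → ℕ := fun m => x ⟨min (2 * m + 1) (2 * k - 1), by omega⟩
  have hy : Monotone y := fun a b hab => hxmono.monotone (Fin.mk_le_mk.mpr (by omega))
  have hy_eq : ∀ m (hm : 2 * m + 1 < 2 * k), y m = x ⟨2 * m + 1, hm⟩ :=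
    fun m hm => congrArg x (Fin.ext (by simp only; omega))
  have hstep : ∀ m < k - 1, t - 2 ≤ (k - 1) * (y (m + 1) - y m) := by
    intro m hm
    rw [hy_eq m (by omega), hy_eq (m + 1) (by omega), mul_comm]
    calc t - 2 ≤ (r ⟨2 * m + 1, by omega⟩ - ℓ ⟨2 * m + 1, by omega⟩ + 2) * (k - 1) := by
          have := hlong ⟨2 * m + 1, by omega⟩ (by simp) (by simp only; omega)
          omega
      _ ≤ _ := Nat.mul_le_mul_right _
          (card_add_one_le_sub_of_odd hxmono hmem hnot hmatch m (by omega))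
  have hy0 : 2 ≤ y 0 := by
    have : x ⟨2 * 0 + 1, _⟩ = x ⟨0, _⟩ + 1 := hmatch ⟨0, by omega⟩ rfl (by simp only; omega)
    have := (hran ⟨0, by omega⟩).1
    have := (hmem ⟨0, by omega⟩).1
    rw [hy_eq 0 (by omega)]
    omega
  have hyt : y (k - 1) ≤ t := by
    rw [hy_eq (k - 1) (by omega)]
    exact (hmem _).2.trans (hran _).2
  have ht : 2 ≤ t := (hy0.trans (hy (Nat.zero_le _))).trans hyt
  have hdvd := dvd_of_le_mul_increments (by omega) hy hstep (by omega)
  exact hmod ((Nat.modEq_iff_dvd' ht).mpr hdvd).symm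

/-- If `(T₁,…,T_{2k})` is a nice tuple of subpaths `T_i = [ℓ i, r i]` of the path on
`{1,…,t}` (induced by a matching `x₁ < ⋯ < x_{2k}` with `x_i ∈ T_i \ ⋃_{j≠i} T_j`;
here `0`-indexed, so edges are `x i, x (i+1)` for even `i`), and `t ≢ 2 (mod k−1)`,
then some `T_{i*}` with `1 < i* < 2k` (`1`-indexed) has
`|V(T_{i*})| ≤ (t−3)/(k−1) − 1`, i.e. `(|V(T_{i*})| + 1)·(k−1) ≤ t − 3`. -/
theorem nice_tuple_has_small_tree (k t : ℕ) (hk : 2 ≤ k)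
    (ℓ r x : Fin (2 * k) → ℕ)
    (hle : ∀ i, ℓ i ≤ r i)
    (hran : ∀ i, 1 ≤ ℓ i ∧ r i ≤ t)
    (hxmono : StrictMono x)
    (hmatch : ∀ i : Fin (2 * k), (i : ℕ) % 2 = 0 →
      ∀ hi : (i : ℕ) + 1 < 2 * k, x ⟨(i : ℕ) + 1, hi⟩ = x i + 1)
    (hmem : ∀ i, ℓ i ≤ x i ∧ x i ≤ r i)
    (hnot : ∀ i j, i ≠ j → ¬(ℓ j ≤ x i ∧ x i ≤ r j))
    (hmod : t % (k - 1) ≠ 2 % (k - 1)) :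
    ∃ i : Fin (2 * k), 0 < (i : ℕ) ∧ (i : ℕ) < 2 * k - 1 ∧
      (r i - ℓ i + 2) * (k - 1) ≤ t - 3 :=
  nice_tuple_has_small_tree_general k t hk ℓ r x hran hxmono hmatch hmem hnot hmod
end

section
/- Let H be a graph, R ⊊ V(H), and n' a positive integer, and suppose H − R has at least k+1 connected components for some k ≥ 0. Then the graph H_R^{n'} contains at least (n')^{k+1} distinct copies of H as a subgraph. -/
open SimpleGraph

/-- The projection from the vertex set of the blowup `H_R^m` back to `V(H)`. -/
def blowupProj {α : Type*} (R : Set α) (m : ℕ) : (↥R ⊕ (Fin m × ↥Rᶜ)) → α :=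
  Sum.elim Subtype.val (fun p => p.2.val)

/-- Whether a vertex of `H_R^m` belongs to the `i`-th copy of `H`. -/
def blowupInCopy {α : Type*} (R : Set α) (m : ℕ) (i : Fin m) : (↥R ⊕ (Fin m × ↥Rᶜ)) → Prop :=
  Sum.elim (fun _ => True) (fun p => p.1 = i)

/-- The graph `H_R^m`: the union of `m` copies of `H` which agree on `R` and are
otherwise pairwise disjoint. -/
def blowupGraph {α : Type*} (H : SimpleGraph α) (R : Set α) (m : ℕ) :
    SimpleGraph (↥R ⊕ (Fin m × ↥Rᶜ)) where
  Adj a b := ∃ i : Fin m, blowupInCopy R m i a ∧ blowupInCopy R m i b ∧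
    H.Adj (blowupProj R m a) (blowupProj R m b)
  symm := by
    constructor
    rintro a b ⟨i, ha, hb, hadj⟩
    exact ⟨i, hb, ha, hadj.symm⟩
  loopless := by
    constructor
    rintro a ⟨i, -, -, hadj⟩
    exact hadj.ne rfl


/-! Each map `f` from the connected components of `H − R` to the `m` copies yields a copy of `H`
in `H_R^m`: put `R` where it is and each component `C` into copy `f C`. This respects edges because
an edge of `H` either meets `R`, which lies in every copy, or stays inside one component. The copy
of a vertex outside `R` can be read off its image, so distinct `f` give distinct subgraphs, and
there are `m ^ #components` of them. -/

section BlowupCopy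

variable {α : Type*} (H : SimpleGraph α) (R : Set α) {m : ℕ}
  (f : (H.induce Rᶜ).ConnectedComponent → Fin m)

noncomputable def blowupEmbed (v : α) : ↥R ⊕ (Fin m × ↥Rᶜ) :=
  open scoped Classical in
  if h : v ∈ R then .inl ⟨v, h⟩ else .inr (f ((H.induce Rᶜ).connectedComponentMk ⟨v, h⟩), ⟨v, h⟩)

variable {H R}

lemma blowupEmbed_of_mem {v : α} (h : v ∈ R) : blowupEmbed H R f v = .inl ⟨v, h⟩ :=
  dif_pos h

lemma blowupEmbed_of_notMem {v : α} (h : v ∉ R) :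
    blowupEmbed H R f v = .inr (f ((H.induce Rᶜ).connectedComponentMk ⟨v, h⟩), ⟨v, h⟩) :=
  dif_neg h

@[simp]
lemma blowupProj_blowupEmbed (v : α) : blowupProj R m (blowupEmbed H R f v) = v := by
  by_cases h : v ∈ R
  · rw [blowupEmbed_of_mem f h]; rfl
  · rw [blowupEmbed_of_notMem f h]; rfl

lemma blowupEmbed_injective : Function.Injective (blowupEmbed H R f) :=
  Function.LeftInverse.injective (blowupProj_blowupEmbed f)

lemma blowupInCopy_blowupEmbed_of_mem (i : Fin m) {v : α} (h : v ∈ R) :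
    blowupInCopy R m i (blowupEmbed H R f v) := by
  rw [blowupEmbed_of_mem f h]; trivial

lemma blowupInCopy_blowupEmbed_of_notMem {v : α} (h : v ∉ R) :
    blowupInCopy R m (f ((H.induce Rᶜ).connectedComponentMk ⟨v, h⟩)) (blowupEmbed H R f v) := by
  rw [blowupEmbed_of_notMem f h]; rfl

lemma blowupGraph_adj_blowupEmbed [NeZero m] {u v : α} (huv : H.Adj u v) :
    (blowupGraph H R m).Adj (blowupEmbed H R f u) (blowupEmbed H R f v) := by
  have hproj : H.Adj (blowupProj R m (blowupEmbed H R f u))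
      (blowupProj R m (blowupEmbed H R f v)) := by simpa
  by_cases hu : u ∈ R <;> by_cases hv : v ∈ R
  · exact ⟨0, blowupInCopy_blowupEmbed_of_mem f 0 hu, blowupInCopy_blowupEmbed_of_mem f 0 hv,
      hproj⟩
  · exact ⟨_, blowupInCopy_blowupEmbed_of_mem f _ hu, blowupInCopy_blowupEmbed_of_notMem f hv,
      hproj⟩
  · exact ⟨_, blowupInCopy_blowupEmbed_of_notMem f hu, blowupInCopy_blowupEmbed_of_mem f _ hv,
      hproj⟩
  · -- an edge of `H − R` stays inside one component, hence inside one copy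
    have hcomp : (H.induce Rᶜ).connectedComponentMk ⟨u, hu⟩ =
        (H.induce Rᶜ).connectedComponentMk ⟨v, hv⟩ :=
      ConnectedComponent.sound (Adj.reachable (by simpa using huv))
    refine ⟨_, blowupInCopy_blowupEmbed_of_notMem f hu, ?_, hproj⟩
    rw [hcomp]
    exact blowupInCopy_blowupEmbed_of_notMem f hv

noncomputable def blowupCopy [NeZero m] : Copy H (blowupGraph H R m) :=
  ⟨⟨blowupEmbed H R f, blowupGraph_adj_blowupEmbed f⟩, blowupEmbed_injective f⟩

@[simp]
lemma blowupCopy_apply [NeZero m] (v : α) : blowupCopy f v = blowupEmbed H R f v := rfl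

lemma blowupCopy_toSubgraph_verts [NeZero m] :
    (blowupCopy f).toSubgraph.verts = Set.range (blowupEmbed H R f) := by
  ext; simp

lemma range_blowupEmbed_injective :
    Function.Injective fun f : (H.induce Rᶜ).ConnectedComponent → Fin m ↦
      Set.range (blowupEmbed H R f) := by
  intro f g (hfg : Set.range _ = Set.range _)
  funext c
  obtain ⟨⟨v, hv⟩, rfl⟩ := c.exists_rep
  obtain ⟨w, hw⟩ : blowupEmbed H R f v ∈ Set.range (blowupEmbed H R g) := hfg ▸ ⟨v, rfl⟩
  obtain rfl : w = v := by simpa using congrArg (blowupProj R m) hw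
  rw [blowupEmbed_of_notMem f hv, blowupEmbed_of_notMem g hv] at hw
  exact (congrArg Prod.fst (Sum.inr_injective hw)).symm

lemma pow_card_connectedComponent_le_card_copies [Finite α] [NeZero m] :
    m ^ Nat.card (H.induce Rᶜ).ConnectedComponent ≤
      Nat.card {H' : (blowupGraph H R m).Subgraph // Nonempty (H ≃g H'.coe)} := by
  calc m ^ Nat.card (H.induce Rᶜ).ConnectedComponent
      = Nat.card ((H.induce Rᶜ).ConnectedComponent → Fin m) := by
        rw [Nat.card_fun, Nat.card_fin]
    _ ≤ _ := Nat.card_le_card_of_injective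
      (fun f ↦ ⟨(blowupCopy f).toSubgraph, ⟨(blowupCopy f).isoToSubgraph⟩⟩)
      fun f g hfg ↦ range_blowupEmbed_injective <| by
        simpa only [blowupCopy_toSubgraph_verts] using congrArg (·.1.verts) hfg

end BlowupCopy

theorem blowup_many_copies_general {α : Type*} [Fintype α] (H : SimpleGraph α)
    (R : Set α) (n' k : ℕ)
    (hcomp : k + 1 ≤ Nat.card (H.induce Rᶜ).ConnectedComponent) :
    n' ^ (k + 1) ≤
      Nat.card {H' : (blowupGraph H R n').Subgraph // Nonempty (H ≃g H'.coe)} := by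
  rcases n'.eq_zero_or_pos with rfl | hn'
  · simp
  have : NeZero n' := ⟨hn'.ne'⟩
  exact (Nat.pow_le_pow_right hn' hcomp).trans pow_card_connectedComponent_le_card_copies

/-- If `R ⊊ V(H)` and `H − R` has at least `k+1` connected components, then the graph
`H_R^{n'}` contains at least `(n')^{k+1}` distinct copies of `H` as a subgraph. -/
theorem blowup_many_copies {α : Type*} [Fintype α] (H : SimpleGraph α)
    (R : Set α) (hR : R ≠ Set.univ) (n' k : ℕ) (hn' : 1 ≤ n')
    (hcomp : k + 1 ≤ Nat.card (H.induce Rᶜ).ConnectedComponent) :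
    n' ^ (k + 1) ≤
      Nat.card {H' : (blowupGraph H R n').Subgraph // Nonempty (H ≃g H'.coe)} :=
  blowup_many_copies_general H R n' k hcomp
end
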